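/- arXiv:2507.08783 — 2 statements merged into one kernel-verified Lean document; each statement's English description precedes it below -/
import Mathlib

section
/- Let W : ℝ → ℝ be continuous with W ≥ 0, let φ(s) := ∫₀ˢ √(2 W(τ)) dτ, and let ε > 0. If u : ℝᵈ → ℝ is differentiable, then ∫_{ℝᵈ} ‖∇(φ∘u)(x)‖ dx ≤ ∫_{ℝᵈ} ((ε/2)‖∇u(x)‖² + (1/ε)W(u(x))) dx, as an inequality of Lebesgue integrals with values in [0,∞]. -/
/-!
Pointwise, the chain rule gives `|∇(φ ∘ u)| = √(2 W(u)) |∇u|`, and Young's inequality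
`√(2w) a ≤ (ε/2) a² + w/ε` bounds this by the Modica–Mortola energy density; integrate.
-/

open MeasureTheory

section

variable {F : Type*} [NormedAddCommGroup F] [InnerProductSpace ℝ F] [CompleteSpace F]
  {g : ℝ → ℝ} {g' : ℝ} {u : F → ℝ} {x : F}

theorem HasDerivAt.comp_hasGradientAt {u' : F}
    (hg : HasDerivAt g g' (u x)) (hu : HasGradientAt u u' x) :
    HasGradientAt (g ∘ u) (g' • u') x := by
  rw [hasGradientAt_iff_hasFDerivAt, map_smul]
  exact hg.comp_hasFDerivAt x (hasGradientAt_iff_hasFDerivAt.mp hu)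

theorem HasDerivAt.norm_gradient_comp (hg : HasDerivAt g g' (u x)) (hu : DifferentiableAt ℝ u x) :
    ‖gradient (g ∘ u) x‖ = |g'| * ‖gradient u x‖ := by
  rw [(hg.comp_hasGradientAt hu.hasGradientAt).gradient, norm_smul, Real.norm_eq_abs]

end

theorem Real.sqrt_two_mul_mul_le {w ε : ℝ} (hw : 0 ≤ w) (hε : 0 < ε) (a : ℝ) :
    √(2 * w) * a ≤ ε / 2 * a ^ 2 + 1 / ε * w := by
  have hsq : √(2 * w) ^ 2 = 2 * w := Real.sq_sqrt (by linarith)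
  have key : ε * (√(2 * w) * a) ≤ ε * (ε / 2 * a ^ 2 + 1 / ε * w) := by
    have hinv : ε * (1 / ε * w) = w := by field_simp
    nlinarith [sq_nonneg (ε * a - √(2 * w))]
  exact le_of_mul_le_mul_left key hε

/-- The Modica–Mortola/Bogomol'nyi bound
`∫ ‖∇(φ∘u)‖ dx ≤ ∫ ((ε/2)‖∇u‖² + (1/ε)W(u)) dx` as an inequality of Lebesgue
integrals with values in `[0,∞]`. -/
theorem stmt2 {d : ℕ} (W : ℝ → ℝ) (hWc : Continuous W) (hW0 : ∀ s, 0 ≤ W s)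
    (φ : ℝ → ℝ) (hφ : ∀ s, φ s = ∫ τ in (0:ℝ)..s, Real.sqrt (2 * W τ))
    (ε : ℝ) (hε : 0 < ε)
    (u : EuclideanSpace ℝ (Fin d) → ℝ) (hu : Differentiable ℝ u) :
    ∫⁻ x, ENNReal.ofReal ‖gradient (φ ∘ u) x‖
      ≤ ∫⁻ x, ENNReal.ofReal ((ε / 2) * ‖gradient u x‖ ^ 2 + (1 / ε) * W (u x)) := by
  have hφ' (s : ℝ) : HasDerivAt φ √(2 * W s) s := by
    rw [funext hφ]
    exact ((continuous_const.mul hWc).sqrt.integral_hasStrictDerivAt 0 s).hasDerivAt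
  refine lintegral_mono fun x => ENNReal.ofReal_le_ofReal ?_
  calc ‖gradient (φ ∘ u) x‖ = √(2 * W (u x)) * ‖gradient u x‖ := by
        rw [(hφ' (u x)).norm_gradient_comp (hu x), abs_of_nonneg (Real.sqrt_nonneg _)]
    _ ≤ ε / 2 * ‖gradient u x‖ ^ 2 + 1 / ε * W (u x) := Real.sqrt_two_mul_mul_le (hW0 _) hε _
end

section
/- Let d ≥ 1 and S^{d−1} := {p ∈ ℝᵈ : ‖p‖ = 1}. Let μ be a finite Borel measure on ℝᵈ × S^{d−1} with first marginal ω, let σ be a finite Borel measure on ℝᵈ, and let n : ℝᵈ → ℝᵈ be Borel measurable with ‖n(x)‖ = 1 for σ-almost every x. Assume the compatibility condition: for every bounded Borel measurable ζ : ℝᵈ → ℝᵈ, ∫_{ℝᵈ×S^{d−1}} ⟨ζ(x), p⟩ dμ(x,p) = ∫_{ℝᵈ} ⟨ζ(x), n(x)⟩ dσ(x). Let ξ : ℝᵈ → ℝᵈ be Borel measurable with ‖ξ(x)‖ ≤ 1 for all x, and set ρ := dσ/dω. Then ∫_{ℝᵈ×S^{d−1}} (1 − ⟨p, ξ(x)⟩)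 dμ(x,p) = ∫_{ℝᵈ} (1 − ρ(x)) dω(x) + ∫_{ℝᵈ} (1 − ⟨n(x), ξ(x)⟩) dσ(x), and consequently ∫_{ℝᵈ} ‖n(x) − ξ(x)‖² dσ(x) ≤ 2 ∫_{ℝᵈ×S^{d−1}} (1 − ⟨p, ξ(x)⟩) dμ(x,p). -/
open MeasureTheory
open scoped RealInnerProductSpace

/-!
Testing the compatibility condition with `ζ = 1_A n` shows `σ(A) ≤ ω(A)` for every Borel `A`,
because `⟨ζ(x), p⟩ ≤ 1_A(x)` on the unit sphere. Hence `σ ≪ ω`, `∫ ρ dω = σ(ℝᵈ)`, and testing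
with `ζ = ξ` gives the decomposition: both sides equal `μ(ℝᵈ × S^{d-1}) - ∫ ⟨n, ξ⟩ dσ`.
The multiplicity term `ω(ℝᵈ) - σ(ℝᵈ)` is nonnegative, and `‖n - ξ‖² ≤ 2 (1 - ⟨n, ξ⟩)` pointwise
since `‖n‖ = 1 ≥ ‖ξ‖`.
-/

section InnerProduct

variable {E : Type*} [NormedAddCommGroup E] [InnerProductSpace ℝ E]

lemma norm_sub_sq_le_two_mul_one_sub_inner {u v : E} (hu : ‖u‖ = 1) (hv : ‖v‖ ≤ 1) :
    ‖u - v‖ ^ 2 ≤ 2 * (1 - ⟪u, v⟫) := by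
  have hv2 : ‖v‖ ^ 2 ≤ 1 := pow_le_one₀ (norm_nonneg v) hv
  rw [norm_sub_sq_real, hu]
  linarith

end InnerProduct

section Integrals

variable {α : Type*} [MeasurableSpace α] {ν : Measure α}

lemma integral_one_sub [IsFiniteMeasure ν] {f : α → ℝ} (hf : Integrable f ν) :
    ∫ a, (1 - f a) ∂ν = ν.real Set.univ - ∫ a, f a ∂ν := by
  rw [integral_sub (integrable_const 1) hf, integral_const, smul_eq_mul, mul_one]

lemma integral_one_sub_toReal_rnDeriv [IsFiniteMeasure ν] {σ : Measure α} [IsFiniteMeasure σ]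
    (hσν : σ ≪ ν) :
    ∫ x, (1 - (σ.rnDeriv ν x).toReal) ∂ν = ν.real Set.univ - σ.real Set.univ := by
  rw [integral_one_sub Measure.integrable_toReal_rnDeriv, Measure.integral_toReal_rnDeriv hσν]

variable {E : Type*} [NormedAddCommGroup E] [InnerProductSpace ℝ E]

lemma integrable_inner_of_norm_le_one [IsFiniteMeasure ν] {f g : α → E}
    (hf : AEStronglyMeasurable f ν) (hg : AEStronglyMeasurable g ν)
    (hf1 : ∀ᵐ a ∂ν, ‖f a‖ ≤ 1) (hg1 : ∀ᵐ a ∂ν, ‖g a‖ ≤ 1) :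
    Integrable (fun a => ⟪f a, g a⟫) ν := by
  refine Integrable.mono' (integrable_const (1 : ℝ)) (hf.inner hg) ?_
  filter_upwards [hf1, hg1] with a hfa hga
  calc ‖⟪f a, g a⟫‖ ≤ ‖f a‖ * ‖g a‖ := norm_inner_le_norm _ _
    _ ≤ 1 := mul_le_one₀ hfa (norm_nonneg _) hga

lemma integral_norm_sub_sq_le [IsFiniteMeasure ν] {n ξ : α → E} (hn1 : ∀ᵐ x ∂ν, ‖n x‖ = 1)
    (hξ1 : ∀ᵐ x ∂ν, ‖ξ x‖ ≤ 1) (hnξ : Integrable (fun x => ⟪n x, ξ x⟫) ν) :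
    ∫ x, ‖n x - ξ x‖ ^ 2 ∂ν ≤ 2 * ∫ x, (1 - ⟪n x, ξ x⟫) ∂ν := by
  rw [← integral_const_mul]
  refine integral_mono_of_nonneg (.of_forall fun x => by positivity)
    (((integrable_const 1).sub hnξ).const_mul 2) ?_
  filter_upwards [hn1, hξ1] with x hnx hξx
  exact norm_sub_sq_le_two_mul_one_sub_inner hnx hξx

lemma integral_inner_indicator_self {n ζ : α → E} (hn1 : ∀ᵐ x ∂ν, ‖n x‖ = 1)
    (hζn : ∀ᵐ x ∂ν, ζ x = n x) {A : Set α} (hA : MeasurableSet A) :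
    ∫ x, ⟪A.indicator ζ x, n x⟫ ∂ν = ν.real A := by
  rw [← integral_indicator_one hA]
  refine integral_congr_ae ?_
  filter_upwards [hn1, hζn] with x hx hζx
  by_cases hxA : x ∈ A
  · simp [hxA, hζx, hx]
  · simp [hxA]

end Integrals

section Varifold

variable {X E : Type*} [MeasurableSpace X] [NormedAddCommGroup E] [InnerProductSpace ℝ E]
  [MeasurableSpace E] [BorelSpace E] [SecondCountableTopology E]
  {μ : Measure (X × E)} [IsFiniteMeasure μ]

lemma integral_inner_indicator_le_map_fst (hball : ∀ᵐ z ∂μ, ‖z.2‖ ≤ 1) {ζ : X → E}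
    (hζm : Measurable ζ) (hζ1 : ∀ x, ‖ζ x‖ ≤ 1) {A : Set X} (hA : MeasurableSet A) :
    ∫ z, ⟪A.indicator ζ z.1, z.2⟫ ∂μ ≤ (μ.map Prod.fst).real A := by
  have hζA1 : ∀ x, ‖A.indicator ζ x‖ ≤ 1 :=
    fun x => (norm_indicator_le_norm_self _ _).trans (hζ1 x)
  rw [map_measureReal_apply measurable_fst hA, ← integral_indicator_one (measurable_fst hA)]
  refine integral_mono_ae ?_ ((integrable_const 1).indicator (measurable_fst hA)) ?_
  · exact integrable_inner_of_norm_le_one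
      ((hζm.indicator hA).comp measurable_fst).aestronglyMeasurable
      measurable_snd.aestronglyMeasurable (.of_forall fun z => hζA1 z.1) hball
  · filter_upwards [hball] with z hz
    by_cases hzA : z.1 ∈ A
    · have hzA' : z ∈ Prod.fst ⁻¹' A := hzA
      calc ⟪A.indicator ζ z.1, z.2⟫ ≤ ‖A.indicator ζ z.1‖ * ‖z.2‖ := real_inner_le_norm _ _
        _ ≤ 1 := mul_le_one₀ (hζA1 z.1) (norm_nonneg _) hz
        _ = _ := (Set.indicator_of_mem hzA' (1 : X × E → ℝ)).symm
    · have hzA' : z ∉ Prod.fst ⁻¹' A := hzA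
      simp [hzA, hzA']

lemma le_map_fst_of_compat (hball : ∀ᵐ z ∂μ, ‖z.2‖ ≤ 1)
    {σ : Measure X} [IsFiniteMeasure σ] {n : X → E} (hn : Measurable n)
    (hn1 : ∀ᵐ x ∂σ, ‖n x‖ = 1)
    (hcompat : ∀ ζ : X → E, Measurable ζ → (∃ C, ∀ x, ‖ζ x‖ ≤ C) →
      ∫ z, ⟪ζ z.1, z.2⟫ ∂μ = ∫ x, ⟪ζ x, n x⟫ ∂σ) :
    σ ≤ μ.map Prod.fst := by
  -- `n` is only σ-a.e. a unit vector; truncating it gives a test field bounded everywhere.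
  set B : Set X := {x | ‖n x‖ ≤ 1}
  have hB : MeasurableSet B := measurableSet_le hn.norm measurable_const
  have hnB1 : ∀ x, ‖B.indicator n x‖ ≤ 1 := by
    intro x
    by_cases hx : x ∈ B
    · rw [Set.indicator_of_mem hx]; exact hx
    · simp [hx]
  have hnB : ∀ᵐ x ∂σ, B.indicator n x = n x := by
    filter_upwards [hn1] with x hx
    exact Set.indicator_of_mem (show x ∈ B from hx.le) n
  refine Measure.le_iff.2 fun A hA => ?_
  have hζm : Measurable (A.indicator (B.indicator n)) := (hn.indicator hB).indicator hA
  have hζ1 : ∀ x, ‖A.indicator (B.indicator n) x‖ ≤ 1 :=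
    fun x => (norm_indicator_le_norm_self _ _).trans (hnB1 x)
  have hreal : σ.real A ≤ (μ.map Prod.fst).real A := by
    rw [← integral_inner_indicator_self hn1 hnB hA, ← hcompat _ hζm ⟨1, hζ1⟩]
    exact integral_inner_indicator_le_map_fst hball (hn.indicator hB) hnB1 hA
  exact (ENNReal.toReal_le_toReal (measure_ne_top _ _) (measure_ne_top _ _)).1 hreal

end Varifold

theorem stmt11_general {d : ℕ}
    (μ : Measure (EuclideanSpace ℝ (Fin d) × EuclideanSpace ℝ (Fin d)))
    [IsFiniteMeasure μ] (hsphere : ∀ᵐ z ∂μ, ‖z.2‖ = 1)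
    (σ : Measure (EuclideanSpace ℝ (Fin d))) [IsFiniteMeasure σ]
    (n : EuclideanSpace ℝ (Fin d) → EuclideanSpace ℝ (Fin d))
    (hn : Measurable n) (hn1 : ∀ᵐ x ∂σ, ‖n x‖ = 1)
    (hcompat : ∀ ζ : EuclideanSpace ℝ (Fin d) → EuclideanSpace ℝ (Fin d),
      Measurable ζ → (∃ C, ∀ x, ‖ζ x‖ ≤ C) →
      ∫ z, ⟪ζ z.1, z.2⟫ ∂μ = ∫ x, ⟪ζ x, n x⟫ ∂σ)
    (ξ : EuclideanSpace ℝ (Fin d) → EuclideanSpace ℝ (Fin d))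
    (hξm : Measurable ξ) (hξ1 : ∀ x, ‖ξ x‖ ≤ 1) :
    (∫ z, (1 - ⟪z.2, ξ z.1⟫) ∂μ
        = (∫ x, (1 - (σ.rnDeriv (μ.map Prod.fst) x).toReal) ∂(μ.map Prod.fst))
          + ∫ x, (1 - ⟪n x, ξ x⟫) ∂σ) ∧
      ∫ x, ‖n x - ξ x‖ ^ 2 ∂σ ≤ 2 * ∫ z, (1 - ⟪z.2, ξ z.1⟫) ∂μ := by
  set ω := μ.map Prod.fst
  have hball : ∀ᵐ z ∂μ, ‖z.2‖ ≤ 1 := hsphere.mono fun z hz => hz.le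
  have hle : σ ≤ ω := le_map_fst_of_compat hball hn hn1 hcompat
  have hσω : σ ≪ ω := Measure.absolutelyContinuous_of_le hle
  have hnξ : Integrable (fun x => ⟪n x, ξ x⟫) σ :=
    integrable_inner_of_norm_le_one hn.aestronglyMeasurable hξm.aestronglyMeasurable
      (hn1.mono fun x hx => hx.le) (.of_forall hξ1)
  have hpξ : Integrable (fun z => ⟪z.2, ξ z.1⟫) μ :=
    integrable_inner_of_norm_le_one measurable_snd.aestronglyMeasurable
      (hξm.comp measurable_fst).aestronglyMeasurable hball
      (.of_forall fun z => hξ1 z.1)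
  have hcompat_ξ : ∫ z, ⟪z.2, ξ z.1⟫ ∂μ = ∫ x, ⟪n x, ξ x⟫ ∂σ := by
    simpa only [real_inner_comm] using hcompat ξ hξm ⟨1, hξ1⟩
  have hmass : ω.real Set.univ = μ.real Set.univ :=
    map_measureReal_apply measurable_fst MeasurableSet.univ
  have hdecomp : ∫ z, (1 - ⟪z.2, ξ z.1⟫) ∂μ
      = (∫ x, (1 - (σ.rnDeriv ω x).toReal) ∂ω) + ∫ x, (1 - ⟪n x, ξ x⟫) ∂σ := by
    rw [integral_one_sub hpξ, integral_one_sub_toReal_rnDeriv hσω, integral_one_sub hnξ,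
      hcompat_ξ, hmass]
    ring
  refine ⟨hdecomp, ?_⟩
  have hmult : 0 ≤ ∫ x, (1 - (σ.rnDeriv ω x).toReal) ∂ω := by
    rw [integral_one_sub_toReal_rnDeriv hσω, sub_nonneg]
    exact ENNReal.toReal_mono (measure_ne_top _ _) (hle _)
  calc ∫ x, ‖n x - ξ x‖ ^ 2 ∂σ ≤ 2 * ∫ x, (1 - ⟪n x, ξ x⟫) ∂σ :=
        integral_norm_sub_sq_le hn1 (.of_forall hξ1) hnξ
    _ ≤ 2 * ∫ z, (1 - ⟪z.2, ξ z.1⟫) ∂μ := by rw [hdecomp]; linarith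

/-- Multiplicity decomposition of the relative entropy: under
the compatibility condition between the oriented varifold `μ` (with marginal
`ω = (Prod.fst)₊μ`), the finite measure `σ` and its unit normal `n`, and for any
Borel `ξ` with `‖ξ‖ ≤ 1`,
`∫ (1 − ⟨p,ξ(x)⟩) dμ = ∫ (1 − ρ) dω + ∫ (1 − ⟨n,ξ⟩) dσ` where `ρ = dσ/dω`, and
consequently `∫ ‖n − ξ‖² dσ ≤ 2 ∫ (1 − ⟨p,ξ(x)⟩) dμ`. -/
theorem stmt11 {d : ℕ} (hd : 1 ≤ d)
    (μ : Measure (EuclideanSpace ℝ (Fin d) × EuclideanSpace ℝ (Fin d)))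
    [IsFiniteMeasure μ] (hsphere : ∀ᵐ z ∂μ, ‖z.2‖ = 1)
    (σ : Measure (EuclideanSpace ℝ (Fin d))) [IsFiniteMeasure σ]
    (n : EuclideanSpace ℝ (Fin d) → EuclideanSpace ℝ (Fin d))
    (hn : Measurable n) (hn1 : ∀ᵐ x ∂σ, ‖n x‖ = 1)
    (hcompat : ∀ ζ : EuclideanSpace ℝ (Fin d) → EuclideanSpace ℝ (Fin d),
      Measurable ζ → (∃ C, ∀ x, ‖ζ x‖ ≤ C) →
      ∫ z, ⟪ζ z.1, z.2⟫ ∂μ = ∫ x, ⟪ζ x, n x⟫ ∂σ)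
    (ξ : EuclideanSpace ℝ (Fin d) → EuclideanSpace ℝ (Fin d))
    (hξm : Measurable ξ) (hξ1 : ∀ x, ‖ξ x‖ ≤ 1) :
    (∫ z, (1 - ⟪z.2, ξ z.1⟫) ∂μ
        = (∫ x, (1 - (σ.rnDeriv (μ.map Prod.fst) x).toReal) ∂(μ.map Prod.fst))
          + ∫ x, (1 - ⟪n x, ξ x⟫) ∂σ) ∧
      ∫ x, ‖n x - ξ x‖ ^ 2 ∂σ ≤ 2 * ∫ z, (1 - ⟪z.2, ξ z.1⟫) ∂μ :=
  stmt11_general μ hsphere σ n hn hn1 hcompat ξ hξm hξ1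
end
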